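/- For every t ≥ 1, m_t − m̃_t = (∏_{i=0}^{t−1} A_{t−i}) (m_0 − m̃_0) + ∑_{i=0}^{t−2} (∏_{j=0}^{i} A_{t−j}) (B_{t−1−i} + C_{t−1−i}) + B_t + C_t, where ∏_{j=0}^{i} A_{t−j} denotes the ordered product A_t A_{t−1} ⋯ A_{t−i}. -/

import Mathlib

/-!
Subtracting the two filter updates shows that the estimation error obeys the affine recurrence
`d_t = A_t d_{t-1} + (B_t + C_t)`, with `A_t` the spoofed filter's closed-loop transition matrix.
Unrolling this recurrence gives the closed form.
-/

open Matrix

theorem List.prod_map_range_succ_sub {M : Type*} [Monoid M] (A : ℕ → M) (t k : ℕ) :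
    ((List.range (k + 1)).map fun j => A (t + 1 - j)).prod
      = A (t + 1) * ((List.range k).map fun j => A (t - j)).prod := by
  simp [List.range_succ_eq_map, Function.comp_def, Nat.succ_sub_succ]

theorem Matrix.eq_of_affine_recurrence {n R : Type*} [Fintype n] [DecidableEq n]
    [CommSemiring R] (A : ℕ → Matrix n n R) (d e : ℕ → n → R)
    (hd : ∀ t, d (t + 1) = A (t + 1) *ᵥ d t + e (t + 1)) (t : ℕ) :
    d t = ((List.range t).map fun j => A (t - j)).prod *ᵥ d 0
      + ∑ i ∈ Finset.range t, ((List.range i).map fun j => A (t - j)).prod *ᵥ e (t - i) := by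
  induction t with
  | zero => simp
  | succ t ih =>
    rw [hd, ih, Finset.sum_range_succ']
    simp only [List.prod_map_range_succ_sub, ← mulVec_mulVec, mulVec_add, mulVec_sum,
      Nat.add_sub_add_right, List.range_zero, List.map_nil, List.prod_nil, one_mulVec,
      Nat.sub_zero]
    abel

theorem kalman_update_sub {n p R : Type*} [Fintype n] [Fintype p] [DecidableEq n]
    [CommRing R] (F : Matrix n n R) (H : Matrix p n R) (K K' : Matrix n p R)
    (x x' w : n → R) (z ε : p → R) :
    ((1 - K * H) *ᵥ (F *ᵥ x + w) + K *ᵥ z)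
        - ((1 - K' * H) *ᵥ (F *ᵥ x' + w) + K' *ᵥ (z + ε))
      = (F - K' * H * F) *ᵥ (x - x') + (K - K') *ᵥ (z - H *ᵥ (F *ᵥ x + w)) + -(K' *ᵥ ε) := by
  simp only [sub_mulVec, one_mulVec, mulVec_add, mulVec_sub, ← mulVec_mulVec]
  abel

/-- Closed form for the difference between unspoofed and spoofed Kalman mean
estimates:
`m_t − m̃_t = (∏_{i=0}^{t−1} A_{t−i}) (m_0 − m̃_0)
  + ∑_{i=0}^{t−2} (∏_{j=0}^{i} A_{t−j}) (B_{t−1−i} + C_{t−1−i}) + B_t + C_t`,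
where the matrix products are ordered with `A_t` leftmost. -/
theorem spoofed_kf_difference_closed_form
    (F G H : Matrix (Fin 2) (Fin 2) ℝ)
    (K K' : ℕ → Matrix (Fin 2) (Fin 2) ℝ)
    (u z ε : ℕ → Fin 2 → ℝ)
    (m m' : ℕ → Fin 2 → ℝ)
    (A : ℕ → Matrix (Fin 2) (Fin 2) ℝ)
    (B C : ℕ → Fin 2 → ℝ)
    (hm : ∀ t : ℕ, 1 ≤ t →
      m t = (1 - K t * H) *ᵥ (F *ᵥ m (t - 1) + G *ᵥ u (t - 1)) + K t *ᵥ z t)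
    (hm' : ∀ t : ℕ, 1 ≤ t →
      m' t = (1 - K' t * H) *ᵥ (F *ᵥ m' (t - 1) + G *ᵥ u (t - 1))
              + K' t *ᵥ (z t + ε t))
    (hA : ∀ t : ℕ, A t = F - K' t * H * F)
    (hB : ∀ t : ℕ, B t = (K t - K' t) *ᵥ (z t - H *ᵥ (F *ᵥ m (t - 1) + G *ᵥ u (t - 1))))
    (hC : ∀ t : ℕ, C t = -(K' t *ᵥ ε t)) :
    ∀ t : ℕ, 1 ≤ t →
      m t - m' t =
        ((List.range t).map (fun i => A (t - i))).prod *ᵥ (m 0 - m' 0)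
        + ∑ i ∈ Finset.range (t - 1),
            ((List.range (i + 1)).map (fun j => A (t - j))).prod *ᵥ
              (B (t - 1 - i) + C (t - 1 - i))
        + B t + C t := by
  have error_step : ∀ t, m (t + 1) - m' (t + 1)
      = A (t + 1) *ᵥ (m t - m' t) + (B (t + 1) + C (t + 1)) := fun t => by
    rw [hm (t + 1) (by omega), hm' (t + 1) (by omega), hA, hB, hC, add_tsub_cancel_right,
      kalman_update_sub, add_assoc]
  rintro t ht
  obtain ⟨k, rfl⟩ : ∃ k, t = k + 1 := ⟨t - 1, by omega⟩
  rw [eq_of_affine_recurrence A (fun t => m t - m' t) (fun t => B t + C t) error_step,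
    Finset.sum_range_succ']
  simp only [add_tsub_cancel_right, Nat.sub_zero, List.range_zero, List.map_nil, List.prod_nil,
    one_mulVec, Nat.add_sub_add_right]
  abel
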